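/- arXiv:1203.4436 — 4 statements merged into one kernel-verified Lean document; each statement's English description precedes it below -/
import Mathlib

section
/- Let α: I → ℝ³ be a unit speed slant helix with curvature κ > 0, torsion τ, Frenet frame (T, N, B), axis d (a unit vector) and constant angle θ with ⟨N, d⟩ = cos θ. If c := ⟨B, d⟩, then c² (τ²/κ² + 1) = sin²θ, i.e. c = ∓ (κ/√(κ²+τ²)) sin θ. -/
/-! A slant helix has `⟨N, d⟩` constant, so differentiating with `N' = -κT + τB` gives
`κ⟨T, d⟩ = τ⟨B, d⟩`. Expanding the unit vector `d` in the Frenet frame gives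
`⟨T, d⟩² + cos²θ + ⟨B, d⟩² = 1`, i.e. `⟨T, d⟩² + ⟨B, d⟩² = sin²θ`; eliminating `⟨T, d⟩`
yields the claim. -/

open RealInnerProductSpace

section

variable {E : Type*} [NormedAddCommGroup E] [InnerProductSpace ℝ E]

theorem inner_sq_add_inner_sq_add_inner_sq_eq_norm_sq {e₁ e₂ e₃ v : E}
    (hv : v = ⟪e₁, v⟫ • e₁ + ⟪e₂, v⟫ • e₂ + ⟪e₃, v⟫ • e₃) :
    ⟪e₁, v⟫ ^ 2 + ⟪e₂, v⟫ ^ 2 + ⟪e₃, v⟫ ^ 2 = ‖v‖ ^ 2 := by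
  calc ⟪e₁, v⟫ ^ 2 + ⟪e₂, v⟫ ^ 2 + ⟪e₃, v⟫ ^ 2
      = ⟪⟪e₁, v⟫ • e₁ + ⟪e₂, v⟫ • e₂ + ⟪e₃, v⟫ • e₃, v⟫ := by
        simp only [inner_add_left, real_inner_smul_left]; ring
    _ = ‖v‖ ^ 2 := by rw [← hv, real_inner_self_eq_norm_sq]

theorem inner_eq_zero_of_hasDerivAt_of_inner_const {f : ℝ → E} {f' d : E} {I : Set ℝ}
    {s a : ℝ} (hI : I ∈ nhds s) (hf : HasDerivAt f f' s) (hconst : ∀ u ∈ I, ⟪f u, d⟫ = a) :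
    ⟪f', d⟫ = 0 := by
  have hderiv : HasDerivAt (fun u => ⟪f u, d⟫) ⟪f', d⟫ s := by
    simpa using hf.inner ℝ (hasDerivAt_const s d)
  have hzero : HasDerivAt (fun u => ⟪f u, d⟫) 0 s :=
    (hasDerivAt_const s a).congr_of_eventuallyEq (Filter.eventuallyEq_of_mem hI hconst)
  exact hderiv.unique hzero

end

theorem slant_helix_binormal_component_general
    (I : Set ℝ) (hI : IsOpen I)
    (T N B : ℝ → EuclideanSpace ℝ (Fin 3)) (κ τ : ℝ → ℝ)
    (hκpos : ∀ s ∈ I, 0 < κ s)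
    (hspan : ∀ s ∈ I, ∀ v : EuclideanSpace ℝ (Fin 3),
      v = (inner ℝ (T s) v : ℝ) • T s + (inner ℝ (N s) v : ℝ) • N s
        + (inner ℝ (B s) v : ℝ) • B s)
    (hN : ∀ s ∈ I, HasDerivAt N (-(κ s) • T s + τ s • B s) s)
    (d : EuclideanSpace ℝ (Fin 3)) (hd : ‖d‖ = 1) (θ : ℝ)
    (hangle : ∀ s ∈ I, (inner ℝ (N s) d : ℝ) = Real.cos θ) :
    ∀ s ∈ I, (inner ℝ (B s) d : ℝ) ^ 2 * ((τ s) ^ 2 / (κ s) ^ 2 + 1)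
      = Real.sin θ ^ 2 := by
  intro s hs
  have hκ : κ s ≠ 0 := (hκpos s hs).ne'
  have hcomp : -(κ s) * ⟪T s, d⟫ + τ s * ⟪B s, d⟫ = 0 := by
    have := inner_eq_zero_of_hasDerivAt_of_inner_const (hI.mem_nhds hs) (hN s hs) hangle
    simpa only [inner_add_left, real_inner_smul_left] using this
  have hpyth := inner_sq_add_inner_sq_add_inner_sq_eq_norm_sq (hspan s hs d)
  rw [hangle s hs, hd] at hpyth
  field_simp
  linear_combination (τ s * ⟪B s, d⟫ + κ s * ⟪T s, d⟫) * hcomp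
    + κ s ^ 2 * (hpyth - Real.sin_sq_add_cos_sq θ)

/-- For a unit speed slant helix with axis `d` and constant angle `θ`,
the quantity `c = ⟨B, d⟩` satisfies `c² (τ²/κ² + 1) = sin² θ`. -/
theorem slant_helix_binormal_component
    (I : Set ℝ) (hI : IsOpen I)
    (T N B : ℝ → EuclideanSpace ℝ (Fin 3)) (κ τ : ℝ → ℝ)
    (hκpos : ∀ s ∈ I, 0 < κ s)
    (hTunit : ∀ s ∈ I, ‖T s‖ = 1) (hNunit : ∀ s ∈ I, ‖N s‖ = 1)
    (hBunit : ∀ s ∈ I, ‖B s‖ = 1)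
    (hTN : ∀ s ∈ I, (inner ℝ (T s) (N s) : ℝ) = 0)
    (hTB : ∀ s ∈ I, (inner ℝ (T s) (B s) : ℝ) = 0)
    (hNB : ∀ s ∈ I, (inner ℝ (N s) (B s) : ℝ) = 0)
    (hspan : ∀ s ∈ I, ∀ v : EuclideanSpace ℝ (Fin 3),
      v = (inner ℝ (T s) v : ℝ) • T s + (inner ℝ (N s) v : ℝ) • N s
        + (inner ℝ (B s) v : ℝ) • B s)
    (hT : ∀ s ∈ I, HasDerivAt T (κ s • N s) s)
    (hN : ∀ s ∈ I, HasDerivAt N (-(κ s) • T s + τ s • B s) s)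
    (hB : ∀ s ∈ I, HasDerivAt B (-(τ s) • N s) s)
    (d : EuclideanSpace ℝ (Fin 3)) (hd : ‖d‖ = 1) (θ : ℝ)
    (hangle : ∀ s ∈ I, (inner ℝ (N s) d : ℝ) = Real.cos θ) :
    ∀ s ∈ I, (inner ℝ (B s) d : ℝ) ^ 2 * ((τ s) ^ 2 / (κ s) ^ 2 + 1)
      = Real.sin θ ^ 2 :=
  slant_helix_binormal_component_general I hI T N B κ τ hκpos hspan hN d hd θ hangle
end

section
/- Let α: I → ℝ³ be a unit speed slant helix with κ > 0, torsion τ, and constant angle θ between the principal normal N and the fixed unit axis d. Then the axis can be written as d = ∓ (τ/√(κ²+τ²)) sin θ · T + cos θ · N ∓ (κ/√(κ²+τ²)) sin θ · B. -/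
/-!
Differentiating `⟪N, d⟫ = cos θ` with the Frenet equation for `N'` gives `κ ⟪T, d⟫ = τ ⟪B, d⟫`,
and `‖d‖ = 1` gives `⟪T, d⟫² + ⟪B, d⟫² = sin² θ`. These two equations determine the pair
`(⟪T, d⟫, ⟪B, d⟫)` up to a common sign, namely as `± (τ, κ) sin θ / √(κ² + τ²)`. The sign is
that of `⟪B, d⟫ sin θ`, which is continuous and, when `sin θ ≠ 0`, never zero because `κ > 0`;
so it is constant on the interval `I`.
-/

open Real
open scoped InnerProductSpace

theorem inner_eq_zero_of_hasDerivAt_of_inner_eqOn_const {E : Type*} [NormedAddCommGroup E]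
    [InnerProductSpace ℝ E] {f : ℝ → E} {f' v : E} {U : Set ℝ} {s C : ℝ} (hU : IsOpen U)
    (hs : s ∈ U) (hf : HasDerivAt f f' s) (hconst : ∀ u ∈ U, ⟪f u, v⟫_ℝ = C) :
    ⟪f', v⟫_ℝ = 0 := by
  have hzero : HasDerivAt (fun u => ⟪f u, v⟫_ℝ) 0 s :=
    (hasDerivAt_const s C).congr_of_eventuallyEq
      (Filter.eventually_of_mem (hU.mem_nhds hs) hconst)
  simpa using (hf.inner ℝ (hasDerivAt_const s v)).unique hzero

theorem norm_sq_eq_sum_inner_sq_of_sum_inner_smul_eq {E ι : Type*} [NormedAddCommGroup E]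
    [InnerProductSpace ℝ E] (s : Finset ι) (e : ι → E) {v : E}
    (hv : ∑ i ∈ s, ⟪e i, v⟫_ℝ • e i = v) : ‖v‖ ^ 2 = ∑ i ∈ s, ⟪e i, v⟫_ℝ ^ 2 := by
  conv_lhs => rw [← real_inner_self_eq_norm_sq, ← hv]
  simp only [sum_inner, real_inner_smul_left, sq]
  rw [hv]

theorem IsPreconnected.exists_sign_mul_pos {α : Type*} [TopologicalSpace α] {f : α → ℝ}
    {S : Set α} (hS : IsPreconnected S) (hf : ContinuousOn f S) (hne : ∀ x ∈ S, f x ≠ 0) :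
    ∃ ε : ℝ, (ε = 1 ∨ ε = -1) ∧ ∀ x ∈ S, 0 < ε * f x := by
  rcases hS.eq_or_eq_neg_of_sq_eq hf hf.abs (fun x _ => by simp [sq_abs])
      (fun hx => abs_ne_zero.2 (hne _ hx)) with h | h
  · exact ⟨1, .inl rfl, fun x hx => by rw [one_mul, h hx]; exact abs_pos.2 (hne x hx)⟩
  · exact ⟨-1, .inr rfl, fun x hx => by
      rw [h hx, Pi.neg_apply, neg_one_mul, neg_neg]; exact abs_pos.2 (hne x hx)⟩

theorem eq_mul_div_sqrt_of_mul_eq_mul_of_sq_add_sq_eq {κ τ a c σ ε : ℝ} (hκ : 0 < κ)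
    (hε : ε = 1 ∨ ε = -1) (hac : κ * a = τ * c) (hsq : a ^ 2 + c ^ 2 = σ ^ 2)
    (hsign : 0 ≤ ε * c * σ) :
    a = ε * (τ / √(κ ^ 2 + τ ^ 2)) * σ ∧ c = ε * (κ / √(κ ^ 2 + τ ^ 2)) * σ := by
  set r := √(κ ^ 2 + τ ^ 2)
  have hr : 0 < r := sqrt_pos.2 (by positivity)
  have hr2 : r ^ 2 = κ ^ 2 + τ ^ 2 := sq_sqrt (by positivity)
  have hε2 : ε ^ 2 = 1 := by rcases hε with rfl | rfl <;> norm_num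
  have hcr_sq : (c * r) ^ 2 = (ε * κ * σ) ^ 2 := by
    linear_combination (c ^ 2) * hr2 + κ ^ 2 * hsq - (κ * a + τ * c) * hac - κ ^ 2 * σ ^ 2 * hε2
  -- The wrong root `c r = -ε κ σ` would make `ε c σ r = -κ σ² ≤ 0`, forcing `σ = 0`.
  have hcr : c * r = ε * κ * σ := by
    rcases eq_or_eq_neg_of_sq_eq_sq _ _ hcr_sq with h | h
    · exact h
    · have hneg : ε * c * σ * r = -(κ * σ ^ 2) := by
        linear_combination ε * σ * h - κ * σ ^ 2 * hε2
      have hσ : κ * σ ^ 2 = 0 := by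
        nlinarith [mul_nonneg hsign hr.le, mul_nonneg hκ.le (sq_nonneg σ)]
      have : σ = 0 := by simpa [hκ.ne'] using hσ
      simp_all
  have hc : c = ε * (κ / r) * σ := by
    field_simp
    linear_combination hcr
  refine ⟨mul_left_cancel₀ hκ.ne' ?_, hc⟩
  rw [hac, hc]
  ring

theorem slant_helix_axis_formula_general
    (I : Set ℝ) (hI : IsOpen I)
    (T N B : ℝ → EuclideanSpace ℝ (Fin 3)) (κ τ : ℝ → ℝ)
    (hκpos : ∀ s ∈ I, 0 < κ s)
    (hspan : ∀ s ∈ I, ∀ v : EuclideanSpace ℝ (Fin 3),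
      v = (inner ℝ (T s) v : ℝ) • T s + (inner ℝ (N s) v : ℝ) • N s
        + (inner ℝ (B s) v : ℝ) • B s)
    (hN : ∀ s ∈ I, HasDerivAt N (-(κ s) • T s + τ s • B s) s)
    (hB : ∀ s ∈ I, HasDerivAt B (-(τ s) • N s) s)
    (d : EuclideanSpace ℝ (Fin 3)) (hd : ‖d‖ = 1) (θ : ℝ)
    (hangle : ∀ s ∈ I, (inner ℝ (N s) d : ℝ) = Real.cos θ)
    (hconn : Convex ℝ I) :
    ∃ ε : ℝ, (ε = 1 ∨ ε = -1) ∧ ∀ s ∈ I,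
      d = (ε * (τ s / Real.sqrt ((κ s) ^ 2 + (τ s) ^ 2)) * Real.sin θ) • T s
        + Real.cos θ • N s
        + (ε * (κ s / Real.sqrt ((κ s) ^ 2 + (τ s) ^ 2)) * Real.sin θ) • B s := by
  have hTB : ∀ s ∈ I, κ s * ⟪T s, d⟫_ℝ = τ s * ⟪B s, d⟫_ℝ := fun s hs => by
    have h := inner_eq_zero_of_hasDerivAt_of_inner_eqOn_const hI hs (hN s hs) hangle
    simp only [inner_add_left, real_inner_smul_left] at h
    linarith
  have hsq : ∀ s ∈ I, ⟪T s, d⟫_ℝ ^ 2 + ⟪B s, d⟫_ℝ ^ 2 = sin θ ^ 2 := fun s hs => by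
    have h := norm_sq_eq_sum_inner_sq_of_sum_inner_smul_eq Finset.univ ![T s, N s, B s]
      (by simpa [Fin.sum_univ_three] using (hspan s hs d).symm)
    simp only [Fin.sum_univ_three, Matrix.cons_val, hd, hangle s hs] at h
    linarith [sin_sq_add_cos_sq θ]
  obtain ⟨ε, hε, hsign⟩ : ∃ ε : ℝ, (ε = 1 ∨ ε = -1) ∧ ∀ s ∈ I, 0 ≤ ε * ⟪B s, d⟫_ℝ * sin θ := by
    by_cases hsin : sin θ = 0
    · exact ⟨1, .inl rfl, fun s _ => by simp [hsin]⟩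
    have hcont : ContinuousOn (fun s => ⟪B s, d⟫_ℝ * sin θ) I := fun s hs =>
      (((hB s hs).continuousAt.inner continuousAt_const).mul continuousAt_const).continuousWithinAt
    have hne : ∀ s ∈ I, ⟪B s, d⟫_ℝ * sin θ ≠ 0 := fun s hs h0 => by
      have hc : ⟪B s, d⟫_ℝ = 0 := (mul_eq_zero.1 h0).resolve_right hsin
      have ha : ⟪T s, d⟫_ℝ = 0 := by simpa [hc, (hκpos s hs).ne'] using hTB s hs
      exact hsin (by simpa [ha, hc] using (hsq s hs).symm)
    obtain ⟨ε, hε, hpos⟩ := hconn.isPreconnected.exists_sign_mul_pos hcont hne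
    exact ⟨ε, hε, fun s hs => by rw [mul_assoc]; exact (hpos s hs).le⟩
  refine ⟨ε, hε, fun s hs => ?_⟩
  obtain ⟨ha, hc⟩ := eq_mul_div_sqrt_of_mul_eq_mul_of_sq_add_sq_eq (hκpos s hs) hε (hTB s hs)
    (hsq s hs) (hsign s hs)
  rw [← ha, ← hc, ← hangle s hs]
  exact hspan s hs d

/-- The axis of a unit speed slant helix can be written as
`d = ∓ (τ/√(κ²+τ²)) sin θ T + cos θ N ∓ (κ/√(κ²+τ²)) sin θ B`. -/
theorem slant_helix_axis_formula
    (I : Set ℝ) (hI : IsOpen I)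
    (T N B : ℝ → EuclideanSpace ℝ (Fin 3)) (κ τ : ℝ → ℝ)
    (hκpos : ∀ s ∈ I, 0 < κ s)
    (hTunit : ∀ s ∈ I, ‖T s‖ = 1) (hNunit : ∀ s ∈ I, ‖N s‖ = 1)
    (hBunit : ∀ s ∈ I, ‖B s‖ = 1)
    (hTN : ∀ s ∈ I, (inner ℝ (T s) (N s) : ℝ) = 0)
    (hTB : ∀ s ∈ I, (inner ℝ (T s) (B s) : ℝ) = 0)
    (hNB : ∀ s ∈ I, (inner ℝ (N s) (B s) : ℝ) = 0)
    (hspan : ∀ s ∈ I, ∀ v : EuclideanSpace ℝ (Fin 3),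
      v = (inner ℝ (T s) v : ℝ) • T s + (inner ℝ (N s) v : ℝ) • N s
        + (inner ℝ (B s) v : ℝ) • B s)
    (hT : ∀ s ∈ I, HasDerivAt T (κ s • N s) s)
    (hN : ∀ s ∈ I, HasDerivAt N (-(κ s) • T s + τ s • B s) s)
    (hB : ∀ s ∈ I, HasDerivAt B (-(τ s) • N s) s)
    (d : EuclideanSpace ℝ (Fin 3)) (hd : ‖d‖ = 1) (θ : ℝ)
    (hangle : ∀ s ∈ I, (inner ℝ (N s) d : ℝ) = Real.cos θ)
    (hconn : Convex ℝ I) :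
    ∃ ε : ℝ, (ε = 1 ∨ ε = -1) ∧ ∀ s ∈ I,
      d = (ε * (τ s / Real.sqrt ((κ s) ^ 2 + (τ s) ^ 2)) * Real.sin θ) • T s
        + Real.cos θ • N s
        + (ε * (κ s / Real.sqrt ((κ s) ^ 2 + (τ s) ^ 2)) * Real.sin θ) • B s :=
  slant_helix_axis_formula_general I hI T N B κ τ hκpos hspan hN hB d hd θ hangle hconn
end

section
/- Let α: I → ℝ³ be a unit speed slant helix with κ > 0, torsion τ, axis d given by d = ∓ (τ/√(κ²+τ²)) sin θ T + cos θ N ∓ (κ/√(κ²+τ²)) sin θ B, and ⟨N'', d⟩ = 0. Then cot θ = ∓ (κ²/(κ²+τ²)^{3/2}) (τ/κ)'. -/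
/-! Expanding the axis `d` in the orthonormal frame `(T, N, B)`, the condition `⟨N'', d⟩ = 0`
becomes the scalar equation `ε sin θ (τ' κ - κ' τ) / √(κ² + τ²) = (κ² + τ²) cos θ`, and
`(τ / κ)' = (τ' κ - κ' τ) / κ²`. -/

open Real

theorem inner_add_add_of_orthonormal {E : Type*} [NormedAddCommGroup E] [InnerProductSpace ℝ E]
    {u v w : E} (hu : ‖u‖ = 1) (hv : ‖v‖ = 1) (hw : ‖w‖ = 1)
    (huv : inner ℝ u v = 0) (huw : inner ℝ u w = 0) (hvw : inner ℝ v w = 0)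
    (a b c a' b' c' : ℝ) :
    inner ℝ (a • u + b • v + c • w) (a' • u + b' • v + c' • w) = a * a' + b * b' + c * c' := by
  have hvu : inner ℝ v u = (0 : ℝ) := by rw [real_inner_comm, huv]
  have hwu : inner ℝ w u = (0 : ℝ) := by rw [real_inner_comm, huw]
  have hwv : inner ℝ w v = (0 : ℝ) := by rw [real_inner_comm, hvw]
  simp only [inner_add_left, inner_add_right, real_inner_smul_left, real_inner_smul_right,
    real_inner_self_eq_norm_sq, hu, hv, hw, huv, huw, hvw, hvu, hwu, hwv]
  ring

theorem sqrt_pow_three {x : ℝ} (hx : 0 ≤ x) : √(x ^ 3) = x * √x := by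
  rw [pow_succ, sqrt_mul (pow_nonneg hx 2), sqrt_sq hx]

theorem cot_eq_of_axis_coordinates {k t k' t' ε θ : ℝ} (hk : k ≠ 0) (hθ : sin θ ≠ 0)
    (h : -k' * (ε * (t / √(k ^ 2 + t ^ 2)) * sin θ) + -(k ^ 2 + t ^ 2) * cos θ
      + t' * (ε * (k / √(k ^ 2 + t ^ 2)) * sin θ) = 0) :
    cos θ / sin θ = ε * (k ^ 2 / √((k ^ 2 + t ^ 2) ^ 3)) * ((t' * k - k' * t) / k ^ 2) := by
  have hr2 : 0 < k ^ 2 + t ^ 2 := by positivity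
  have hr : 0 < √(k ^ 2 + t ^ 2) := sqrt_pos.mpr hr2
  rw [sqrt_pow_three hr2.le]
  field_simp at h ⊢
  linear_combination -h

theorem slant_helix_cot_angle_general
    (I : Set ℝ)
    (T N B : ℝ → EuclideanSpace ℝ (Fin 3)) (κ τ κ' τ' : ℝ → ℝ)
    (hκpos : ∀ s ∈ I, 0 < κ s)
    (hTunit : ∀ s ∈ I, ‖T s‖ = 1) (hNunit : ∀ s ∈ I, ‖N s‖ = 1)
    (hBunit : ∀ s ∈ I, ‖B s‖ = 1)
    (hTN : ∀ s ∈ I, (inner ℝ (T s) (N s) : ℝ) = 0)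
    (hTB : ∀ s ∈ I, (inner ℝ (T s) (B s) : ℝ) = 0)
    (hNB : ∀ s ∈ I, (inner ℝ (N s) (B s) : ℝ) = 0)
    (d : EuclideanSpace ℝ (Fin 3)) (θ : ℝ) (hθ : Real.sin θ ≠ 0)
    (ε : ℝ)
    (haxis : ∀ s ∈ I,
      d = (ε * (τ s / Real.sqrt ((κ s) ^ 2 + (τ s) ^ 2)) * Real.sin θ) • T s
        + Real.cos θ • N s
        + (ε * (κ s / Real.sqrt ((κ s) ^ 2 + (τ s) ^ 2)) * Real.sin θ) • B s)
    (hNdd : ∀ s ∈ I,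
      (inner ℝ (-(κ' s) • T s - ((κ s) ^ 2 + (τ s) ^ 2) • N s + τ' s • B s) d : ℝ)
        = 0) :
    ∀ s ∈ I, Real.cos θ / Real.sin θ
      = ε * ((κ s) ^ 2 / Real.sqrt (((κ s) ^ 2 + (τ s) ^ 2) ^ 3))
          * ((τ' s * κ s - κ' s * τ s) / (κ s) ^ 2) := by
  intro s hs
  have hcoord := hNdd s hs
  rw [haxis s hs, sub_eq_add_neg, ← neg_smul, inner_add_add_of_orthonormal (hTunit s hs)
    (hNunit s hs) (hBunit s hs) (hTN s hs) (hTB s hs) (hNB s hs)] at hcoord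
  exact cot_eq_of_axis_coordinates (hκpos s hs).ne' hθ hcoord

/-- If the axis `d` of a unit speed slant helix is given by
`d = ∓ (τ/√(κ²+τ²)) sin θ T + cos θ N ∓ (κ/√(κ²+τ²)) sin θ B` and `⟨N'', d⟩ = 0`,
then `cot θ = ∓ (κ²/(κ²+τ²)^{3/2}) (τ/κ)'`. -/
theorem slant_helix_cot_angle
    (I : Set ℝ) (hI : IsOpen I)
    (T N B : ℝ → EuclideanSpace ℝ (Fin 3)) (κ τ κ' τ' : ℝ → ℝ)
    (hκpos : ∀ s ∈ I, 0 < κ s)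
    (hTunit : ∀ s ∈ I, ‖T s‖ = 1) (hNunit : ∀ s ∈ I, ‖N s‖ = 1)
    (hBunit : ∀ s ∈ I, ‖B s‖ = 1)
    (hTN : ∀ s ∈ I, (inner ℝ (T s) (N s) : ℝ) = 0)
    (hTB : ∀ s ∈ I, (inner ℝ (T s) (B s) : ℝ) = 0)
    (hNB : ∀ s ∈ I, (inner ℝ (N s) (B s) : ℝ) = 0)
    (hT : ∀ s ∈ I, HasDerivAt T (κ s • N s) s)
    (hN : ∀ s ∈ I, HasDerivAt N (-(κ s) • T s + τ s • B s) s)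
    (hB : ∀ s ∈ I, HasDerivAt B (-(τ s) • N s) s)
    (hκ' : ∀ s ∈ I, HasDerivAt κ (κ' s) s)
    (hτ' : ∀ s ∈ I, HasDerivAt τ (τ' s) s)
    (d : EuclideanSpace ℝ (Fin 3)) (θ : ℝ) (hθ : Real.sin θ ≠ 0)
    (ε : ℝ) (hε : ε = 1 ∨ ε = -1)
    (haxis : ∀ s ∈ I,
      d = (ε * (τ s / Real.sqrt ((κ s) ^ 2 + (τ s) ^ 2)) * Real.sin θ) • T s
        + Real.cos θ • N s
        + (ε * (κ s / Real.sqrt ((κ s) ^ 2 + (τ s) ^ 2)) * Real.sin θ) • B s)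
    (hNdd : ∀ s ∈ I,
      (inner ℝ (-(κ' s) • T s - ((κ s) ^ 2 + (τ s) ^ 2) • N s + τ' s • B s) d : ℝ)
        = 0) :
    ∀ s ∈ I, Real.cos θ / Real.sin θ
      = ε * ((κ s) ^ 2 / Real.sqrt (((κ s) ^ 2 + (τ s) ^ 2) ^ 3))
          * ((τ' s * κ s - κ' s * τ s) / (κ s) ^ 2) :=
  slant_helix_cot_angle_general I T N B κ τ κ' τ' hκpos hTunit hNunit hBunit hTN hTB hNB d θ hθ ε
    haxis hNdd
end

section
/- Let α: I → ℝ³ be a unit speed curve with curvature κ > 0, torsion τ, κ²+τ² > 0, and let β = N be its principal normal indicatrix on S². If κ_β denotes the curvature of β and k_g its geodesic curvature on S² (with normal curvature k_n = 1 on the unit sphere, so k_g² + 1 = κ_β²), then k_g = ± (κ²/(κ²+τ²)^{3/2})(τ/κ)'. -/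
noncomputable section

/-- The cross product on `ℝ³ = EuclideanSpace ℝ (Fin 3)`. -/
def cross3 (u v : EuclideanSpace ℝ (Fin 3)) : EuclideanSpace ℝ (Fin 3) :=
  WithLp.toLp 2 ![u 1 * v 2 - u 2 * v 1, u 2 * v 0 - u 0 * v 2, u 0 * v 1 - u 1 * v 0]

/-!
In the Frenet frame `N' = -κT + τB` and `N'' = -κ'T - (κ² + τ²)N + τ'B`, and the frame is
orthonormal because `B = T × N`. Lagrange's identity `‖v × w‖² = ‖v‖²‖w‖² - ⟪v, w⟫²` thus reduces
`κ_β` to coordinates: with `P = κ² + τ²`, `‖N'‖² = P` and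
`‖N' × N''‖² = P (κ'² + P² + τ'²) - (κκ' + ττ')² = P³ + (κτ' - τκ')²`. Hence
`k_g² = κ_β² - 1 = (κτ' - τκ')² / P³`, and `(κτ' - τκ') / P^{3/2} = (κ² / P^{3/2}) (τ/κ)'`.
-/

open Matrix RealInnerProductSpace

lemma cross3_eq_crossProduct (u v : EuclideanSpace ℝ (Fin 3)) :
    cross3 u v = WithLp.toLp 2 (u.ofLp ⨯₃ v.ofLp) :=
  rfl

lemma inner_cross3_cross3 (u v w x : EuclideanSpace ℝ (Fin 3)) :
    ⟪cross3 u v, cross3 w x⟫ = ⟪u, w⟫ * ⟪v, x⟫ - ⟪u, x⟫ * ⟪v, w⟫ := by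
  simp only [EuclideanSpace.inner_eq_star_dotProduct, star_trivial, cross3_eq_crossProduct,
    cross_dot_cross]
  ring

lemma norm_cross3_sq (u v : EuclideanSpace ℝ (Fin 3)) :
    ‖cross3 u v‖ ^ 2 = ‖u‖ ^ 2 * ‖v‖ ^ 2 - ⟪u, v⟫ ^ 2 := by
  simp only [← real_inner_self_eq_norm_sq, inner_cross3_cross3, real_inner_comm v u]
  ring

lemma inner_cross3_left (u v : EuclideanSpace ℝ (Fin 3)) : ⟪u, cross3 u v⟫ = 0 := by
  rw [EuclideanSpace.inner_eq_star_dotProduct, star_trivial, cross3_eq_crossProduct,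
    dotProduct_comm, dot_self_cross]

lemma inner_cross3_right (u v : EuclideanSpace ℝ (Fin 3)) : ⟪v, cross3 u v⟫ = 0 := by
  rw [EuclideanSpace.inner_eq_star_dotProduct, star_trivial, cross3_eq_crossProduct,
    dotProduct_comm, dot_cross_self]

lemma orthonormal_cross3 {u v : EuclideanSpace ℝ (Fin 3)} (hu : ‖u‖ = 1) (hv : ‖v‖ = 1)
    (huv : ⟪u, v⟫ = 0) : Orthonormal ℝ ![u, v, cross3 u v] := by
  have hw : ‖cross3 u v‖ = 1 := by
    have h := norm_cross3_sq u v
    rw [hu, hv, huv] at h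
    nlinarith [norm_nonneg (cross3 u v)]
  have hwu : ⟪cross3 u v, u⟫ = 0 := by rw [real_inner_comm, inner_cross3_left]
  have hwv : ⟪cross3 u v, v⟫ = 0 := by rw [real_inner_comm, inner_cross3_right]
  rw [orthonormal_iff_ite]
  intro i j
  fin_cases i <;> fin_cases j <;>
    simp [hu, hv, hw, huv, real_inner_comm u v, hwu, hwv, inner_cross3_left, inner_cross3_right]

lemma Orthonormal.inner_add_add_three {E : Type*} [NormedAddCommGroup E]
    [InnerProductSpace ℝ E] {x y z : E} (h : Orthonormal ℝ ![x, y, z]) (a b c a' b' c' : ℝ) :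
    ⟪a • x + b • y + c • z, a' • x + b' • y + c' • z⟫ = a * a' + b * b' + c * c' := by
  simpa [Fin.sum_univ_three] using h.inner_sum ![a, b, c] ![a', b', c'] Finset.univ

lemma norm_neg_smul_add_smul_sq {T N B : EuclideanSpace ℝ (Fin 3)}
    (hframe : Orthonormal ℝ ![T, N, B]) (κ τ : ℝ) :
    ‖-κ • T + τ • B‖ ^ 2 = κ ^ 2 + τ ^ 2 := by
  have h := hframe.inner_add_add_three (-κ) 0 τ (-κ) 0 τ
  rw [zero_smul, add_zero, real_inner_self_eq_norm_sq] at h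
  rw [h]
  ring

lemma norm_cross3_normal_derivs_sq {T N B : EuclideanSpace ℝ (Fin 3)}
    (hframe : Orthonormal ℝ ![T, N, B]) (κ τ κ' τ' : ℝ) :
    ‖cross3 (-κ • T + τ • B) (-κ' • T - (κ ^ 2 + τ ^ 2) • N + τ' • B)‖ ^ 2
      = (κ ^ 2 + τ ^ 2) ^ 3 + (τ' * κ - κ' * τ) ^ 2 := by
  have hw : -κ' • T - (κ ^ 2 + τ ^ 2) • N + τ' • B
      = -κ' • T + (-(κ ^ 2 + τ ^ 2)) • N + τ' • B := by
    rw [sub_eq_add_neg, ← neg_smul]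
  have hv : -κ • T + τ • B = -κ • T + (0 : ℝ) • N + τ • B := by
    rw [zero_smul, add_zero]
  rw [norm_cross3_sq, norm_neg_smul_add_smul_sq hframe, hw, ← real_inner_self_eq_norm_sq, hv,
    hframe.inner_add_add_three, hframe.inner_add_add_three]
  ring

lemma normal_indicatrix_curvature_sq {T N B : EuclideanSpace ℝ (Fin 3)}
    (hframe : Orthonormal ℝ ![T, N, B]) {κ τ : ℝ} (κ' τ' : ℝ) (hP : 0 < κ ^ 2 + τ ^ 2) :
    (‖cross3 (-κ • T + τ • B) (-κ' • T - (κ ^ 2 + τ ^ 2) • N + τ' • B)‖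
        / ‖-κ • T + τ • B‖ ^ 3) ^ 2
      = 1 + (τ' * κ - κ' * τ) ^ 2 / (κ ^ 2 + τ ^ 2) ^ 3 := by
  rw [div_pow, ← pow_mul, mul_comm, pow_mul, norm_cross3_normal_derivs_sq hframe,
    norm_neg_smul_add_smul_sq hframe]
  field_simp

lemma sq_mul_div_sqrt_cube_mul_div_sq {κ P : ℝ} (hκ : κ ≠ 0) (hP : 0 < P) (D : ℝ) :
    (κ ^ 2 / Real.sqrt (P ^ 3) * (D / κ ^ 2)) ^ 2 = D ^ 2 / P ^ 3 := by
  have hsqrt : Real.sqrt (P ^ 3) ^ 2 = P ^ 3 := Real.sq_sqrt (by positivity)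
  rw [div_mul_div_comm, mul_comm, mul_div_mul_right _ _ (pow_ne_zero 2 hκ), div_pow, hsqrt]

theorem normal_indicatrix_geodesic_curvature_general
    (I : Set ℝ)
    (T N B : ℝ → EuclideanSpace ℝ (Fin 3)) (κ τ κ' τ' k_g : ℝ → ℝ)
    (hκpos : ∀ s ∈ I, 0 < κ s)
    (hκτpos : ∀ s ∈ I, 0 < (κ s) ^ 2 + (τ s) ^ 2)
    (hTunit : ∀ s ∈ I, ‖T s‖ = 1) (hNunit : ∀ s ∈ I, ‖N s‖ = 1)
    (hTN : ∀ s ∈ I, (inner ℝ (T s) (N s) : ℝ) = 0)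
    (hBdef : ∀ s ∈ I, B s = cross3 (T s) (N s))
    (hkg : ∀ s ∈ I, (k_g s) ^ 2 + 1
      = (‖cross3 (-(κ s) • T s + τ s • B s)
            (-(κ' s) • T s - ((κ s) ^ 2 + (τ s) ^ 2) • N s + τ' s • B s)‖
          / ‖-(κ s) • T s + τ s • B s‖ ^ 3) ^ 2) :
    ∀ s ∈ I,
      k_g s = ((κ s) ^ 2 / Real.sqrt (((κ s) ^ 2 + (τ s) ^ 2) ^ 3))
          * ((τ' s * κ s - κ' s * τ s) / (κ s) ^ 2)
      ∨ k_g s = -(((κ s) ^ 2 / Real.sqrt (((κ s) ^ 2 + (τ s) ^ 2) ^ 3))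
          * ((τ' s * κ s - κ' s * τ s) / (κ s) ^ 2)) := by
  intro s hs
  have hframe : Orthonormal ℝ ![T s, N s, B s] := by
    rw [hBdef s hs]
    exact orthonormal_cross3 (hTunit s hs) (hNunit s hs) (hTN s hs)
  have hkg_sq : k_g s ^ 2 = (τ' s * κ s - κ' s * τ s) ^ 2 / ((κ s) ^ 2 + (τ s) ^ 2) ^ 3 := by
    have h := hkg s hs
    rw [normal_indicatrix_curvature_sq hframe _ _ (hκτpos s hs)] at h
    linarith
  rw [← sq_mul_div_sqrt_cube_mul_div_sq (hκpos s hs).ne' (hκτpos s hs)] at hkg_sq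
  exact sq_eq_sq_iff_eq_or_eq_neg.mp hkg_sq

/-- If `k_g` is the geodesic curvature of the principal normal
indicatrix `β = N` on the unit sphere, determined by `k_g² + 1 = κ_β²` where
`κ_β = ‖N' × N''‖/‖N'‖³`, then `k_g = ± (κ²/(κ²+τ²)^{3/2})(τ/κ)'`. -/
theorem normal_indicatrix_geodesic_curvature
    (I : Set ℝ) (hI : IsOpen I)
    (T N B : ℝ → EuclideanSpace ℝ (Fin 3)) (κ τ κ' τ' k_g : ℝ → ℝ)
    (hκpos : ∀ s ∈ I, 0 < κ s)
    (hκτpos : ∀ s ∈ I, 0 < (κ s) ^ 2 + (τ s) ^ 2)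
    (hTunit : ∀ s ∈ I, ‖T s‖ = 1) (hNunit : ∀ s ∈ I, ‖N s‖ = 1)
    (hTN : ∀ s ∈ I, (inner ℝ (T s) (N s) : ℝ) = 0)
    (hBdef : ∀ s ∈ I, B s = cross3 (T s) (N s))
    (hT : ∀ s ∈ I, HasDerivAt T (κ s • N s) s)
    (hN : ∀ s ∈ I, HasDerivAt N (-(κ s) • T s + τ s • B s) s)
    (hB : ∀ s ∈ I, HasDerivAt B (-(τ s) • N s) s)
    (hκ' : ∀ s ∈ I, HasDerivAt κ (κ' s) s)
    (hτ' : ∀ s ∈ I, HasDerivAt τ (τ' s) s)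
    (hkg : ∀ s ∈ I, (k_g s) ^ 2 + 1
      = (‖cross3 (-(κ s) • T s + τ s • B s)
            (-(κ' s) • T s - ((κ s) ^ 2 + (τ s) ^ 2) • N s + τ' s • B s)‖
          / ‖-(κ s) • T s + τ s • B s‖ ^ 3) ^ 2) :
    ∀ s ∈ I,
      k_g s = ((κ s) ^ 2 / Real.sqrt (((κ s) ^ 2 + (τ s) ^ 2) ^ 3))
          * ((τ' s * κ s - κ' s * τ s) / (κ s) ^ 2)
      ∨ k_g s = -(((κ s) ^ 2 / Real.sqrt (((κ s) ^ 2 + (τ s) ^ 2) ^ 3))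
          * ((τ' s * κ s - κ' s * τ s) / (κ s) ^ 2)) :=
  normal_indicatrix_geodesic_curvature_general I T N B κ τ κ' τ' k_g hκpos hκτpos hTunit hNunit hTN
    hBdef hkg
end
end
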